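/- Let p, q ≥ 1 with 2(q-1) = p-1 and 0 < l < r, and let ξ, η be defined as in the truncated power construction: ξ(t) = (q²/p)·(0 if t ≤ l; t^p - l^p if l ≤ t ≤ r; p·r^{p-1}(t-r) + r^p - l^p if t ≥ r) and η(t) = (l^q if t ≤ l; t^q if l ≤ t ≤ r; q·r^{q-1}(t-r) + r^q if t ≥ r). Then for every t ≥ 0, t·ξ(t) ≤ q·η(t)². -/
import Mathlib


open Real

/-- for the truncated power functions ξ and η with `p, q ≥ 1`,
`2(q-1) = p-1`, `0 < l < r`, one has `t·ξ(t) ≤ q·η(t)²` for every `t ≥ 0`. -/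
theorem t_mul_xi_le_q_eta_sq (p q l r : ℝ) (hp : 1 ≤ p) (hq : 1 ≤ q)
    (hpq : 2 * (q - 1) = p - 1) (hl : 0 < l) (hlr : l < r)
    (ξ η : ℝ → ℝ)
    (hξ : ∀ t, ξ t = (q ^ 2 / p) *
      (if t ≤ l then 0 else if t ≤ r then t ^ p - l ^ p
       else p * r ^ (p - 1) * (t - r) + r ^ p - l ^ p))
    (hη : ∀ t, η t = if t ≤ l then l ^ q else if t ≤ r then t ^ q
       else q * r ^ (q - 1) * (t - r) + r ^ q) :
    ∀ t : ℝ, 0 ≤ t → t * ξ t ≤ q * (η t) ^ 2 := by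
  intro t ht
  have hp0 : (0:ℝ) < p := lt_of_lt_of_le one_pos hp
  have hq0 : (0:ℝ) < q := lt_of_lt_of_le one_pos hq
  have hr0 : (0:ℝ) < r := hl.trans hlr
  have hc0 : 0 ≤ q ^ 2 / p := by positivity
  have hcq : q ^ 2 / p ≤ q := by
    rw [div_le_iff₀ hp0]; nlinarith
  have hcq2 : q ^ 2 / p ≤ q ^ 2 := by nlinarith
  rw [hξ t, hη t]
  split_ifs with h1 h2
  · have : 0 ≤ q * (l ^ q) ^ 2 := by positivity
    simpa using this
  · -- l < t ≤ r
    have ht0 : (0:ℝ) < t := hl.trans (lt_of_not_ge h1)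
    have key : t * t ^ p = t ^ q * t ^ q := by
      rw [show t * t ^ p = t ^ (1 + p) from by rw [Real.rpow_add ht0, Real.rpow_one],
        show (1:ℝ) + p = q + q by linarith, Real.rpow_add ht0]
    have hlp : 0 ≤ l ^ p := Real.rpow_nonneg hl.le p
    have htq : 0 ≤ t ^ q := Real.rpow_nonneg ht0.le q
    nlinarith [mul_nonneg hlp ht, mul_nonneg htq htq,
      mul_le_mul_of_nonneg_right hcq (mul_nonneg htq htq)]
  · -- t > r
    have htr : r < t := lt_of_not_ge h2
    set A := r ^ (q - 1) with hA
    have hA0 : 0 ≤ A := Real.rpow_nonneg hr0.le _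
    have hrp1 : r ^ (p - 1) = A * A := by
      rw [hA, ← Real.rpow_add hr0]
      congr 1; linarith
    have hrq : r ^ q = A * r := by
      rw [show q = (q - 1) + 1 by ring, Real.rpow_add hr0, Real.rpow_one]
    have hrp : r ^ p = A * A * r := by
      rw [show p = (q - 1) + ((q - 1) + 1) by linarith, Real.rpow_add hr0,
        Real.rpow_add hr0, Real.rpow_one, hA]
      ring
    have hlp : 0 ≤ l ^ p := Real.rpow_nonneg hl.le p
    have hs0 : 0 < t - r := sub_pos.mpr htr
    rw [hrp1, hrq, hrp]
    have expand : t * (q ^ 2 / p * (p * (A * A) * (t - r) + A * A * r - l ^ p)) =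
        q ^ 2 * (A * A) * (t - r) * t + (q ^ 2 / p) * (A * A) * r * t
          - (q ^ 2 / p) * (l ^ p) * t := by
      field_simp
    rw [expand]
    nlinarith [mul_nonneg (mul_nonneg hc0 hlp) ht,
      mul_nonneg (mul_nonneg (sub_nonneg.mpr hcq) (mul_nonneg hA0 hA0))
        (mul_nonneg hr0.le hr0.le),
      mul_nonneg (mul_nonneg (sub_nonneg.mpr hcq2) (mul_nonneg hA0 hA0))
        (mul_nonneg hr0.le hs0.le),
      mul_nonneg (mul_nonneg (mul_nonneg (sub_nonneg.mpr (by nlinarith : q ^ 2 ≤ q ^ 3))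
        (mul_nonneg hA0 hA0)) hs0.le) hs0.le,
      mul_nonneg (mul_nonneg (mul_nonneg hq0.le (mul_nonneg hA0 hA0)) hs0.le) hr0.le]
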